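/- Let Ω be a set and C a collection of subsets of Ω with κ(C) = σ(C), and let F = σ(C). Then for every ω ∈ Ω, the atom of F containing ω equals the intersection of all members of C containing ω: A_F(ω) = A_C(ω). -/

import Mathlib

open MeasureTheory Classical

variable {Ω : Type*}

/-- The intersection of all members of `C` containing `ω`, with the convention
that it is `∅` when no member of `C` contains `ω`. -/
noncomputable def atomOf (C : Set (Set Ω)) (ω : Ω) : Set Ω :=
  if ∃ B ∈ C, ω ∈ B then ⋂₀ {B | B ∈ C ∧ ω ∈ B} else ∅

/-- `C_σ` : the collection of all countable unions of members of `C`. -/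
def sigmaUnions (C : Set (Set Ω)) : Set (Set Ω) :=
  {A | ∃ f : ℕ → Set Ω, (∀ n, f n ∈ C) ∧ A = ⋃ n, f n}

/-- `C_σδ` : the collection of all countable intersections of members of `C_σ`. -/
def sigmaDelta (C : Set (Set Ω)) : Set (Set Ω) :=
  {A | ∃ f : ℕ → Set Ω, (∀ n, f n ∈ sigmaUnions C) ∧ A = ⋂ n, f n}

/-- A κ class: closed under countable (nonempty) unions and intersections. -/
def IsKappaClass (K : Set (Set Ω)) : Prop :=
  (∀ f : ℕ → Set Ω, (∀ n, f n ∈ K) → (⋃ n, f n) ∈ K) ∧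
  (∀ f : ℕ → Set Ω, (∀ n, f n ∈ K) → (⋂ n, f n) ∈ K)

/-- `κ(C)` : the smallest κ class containing `C`. -/
def kappa (C : Set (Set Ω)) : Set (Set Ω) :=
  ⋂₀ {K | IsKappaClass K ∧ C ⊆ K}

/-- `σ(C)` viewed as the collection of its measurable sets. -/
def sigmaSets (C : Set (Set Ω)) : Set (Set Ω) :=
  {s | MeasurableSet[MeasurableSpace.generateFrom C] s}

/-! For fixed `ω`, the sets `B` with `ω ∈ B → ω ∈ A_C(ω) ∧ A_C(ω) ⊆ B` form a κ class containing
`C`, hence containing `κ(C) = σ(C)`. Applied to `Ω ∈ σ(C)` this shows `C_ω ≠ ∅`, and then every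
member of `σ(C)` through `ω` contains `A_C(ω)`, so `A_F(ω) ⊇ A_C(ω)`; the other inclusion is
`C ⊆ σ(C)`. -/

theorem mem_atomOf_self_iff {C : Set (Set Ω)} {ω : Ω} :
    ω ∈ atomOf C ω ↔ ∃ B ∈ C, ω ∈ B := by
  by_cases hω : ∃ B ∈ C, ω ∈ B
  · rw [atomOf, if_pos hω]
    exact iff_of_true (Set.mem_sInter.mpr fun _ hB => hB.2) hω
  · rw [atomOf, if_neg hω]
    exact iff_of_false (Set.notMem_empty ω) hω

theorem atomOf_subset {C : Set (Set Ω)} {ω : Ω} {B : Set Ω} (hB : B ∈ C) (hωB : ω ∈ B) :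
    atomOf C ω ⊆ B := by
  rw [atomOf, if_pos ⟨B, hB, hωB⟩]
  exact Set.sInter_subset_of_mem ⟨hB, hωB⟩

theorem subset_atomOf {C : Set (Set Ω)} {ω : Ω} {S : Set Ω} (hω : ∃ B ∈ C, ω ∈ B)
    (hS : ∀ B ∈ C, ω ∈ B → S ⊆ B) : S ⊆ atomOf C ω := by
  rw [atomOf, if_pos hω]
  exact Set.subset_sInter fun B hB => hS B hB.1 hB.2

theorem atomOf_anti {C D : Set (Set Ω)} {ω : Ω} (hCD : C ⊆ D) (hω : ∃ B ∈ C, ω ∈ B) :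
    atomOf D ω ⊆ atomOf C ω :=
  subset_atomOf hω fun _ hB hωB => atomOf_subset (hCD hB) hωB

theorem kappa_subset {C K : Set (Set Ω)} (hK : IsKappaClass K) (hCK : C ⊆ K) : kappa C ⊆ K :=
  Set.sInter_subset_of_mem ⟨hK, hCK⟩

theorem isKappaClass_setOf_mem_imp (ω : Ω) (A : Set Ω) :
    IsKappaClass {B | ω ∈ B → ω ∈ A ∧ A ⊆ B} := by
  refine ⟨fun f hf hω => ?_, fun f hf hω => ?_⟩
  · obtain ⟨n, hn⟩ := Set.mem_iUnion.mp hω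
    exact ⟨(hf n hn).1, (hf n hn).2.trans (Set.subset_iUnion f n)⟩
  · have hωf := Set.mem_iInter.mp hω
    exact ⟨(hf 0 (hωf 0)).1, Set.subset_iInter fun n => (hf n (hωf n)).2⟩

theorem mem_atomOf_and_atomOf_subset_of_mem_kappa {C : Set (Set Ω)} {ω : Ω} {B : Set Ω}
    (hB : B ∈ kappa C) (hωB : ω ∈ B) : ω ∈ atomOf C ω ∧ atomOf C ω ⊆ B :=
  kappa_subset (isKappaClass_setOf_mem_imp ω (atomOf C ω))
    (fun B' hB' hωB' => ⟨mem_atomOf_self_iff.mpr ⟨B', hB', hωB'⟩, atomOf_subset hB' hωB'⟩)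
    hB hωB

theorem subset_sigmaSets (C : Set (Set Ω)) : C ⊆ sigmaSets C :=
  fun _ hB => MeasurableSpace.measurableSet_generateFrom hB

theorem atom_eq_of_kappa_eq_sigma (C : Set (Set Ω)) (h : kappa C = sigmaSets C) (ω : Ω) :
    atomOf (sigmaSets C) ω = atomOf C ω := by
  have hκ : ∀ B ∈ sigmaSets C, ω ∈ B → ω ∈ atomOf C ω ∧ atomOf C ω ⊆ B := fun B hB =>
    mem_atomOf_and_atomOf_subset_of_mem_kappa (h ▸ hB)
  obtain ⟨B, hB, hωB⟩ : ∃ B ∈ C, ω ∈ B :=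
    mem_atomOf_self_iff.mp (hκ Set.univ (@MeasurableSet.univ Ω (.generateFrom C)) trivial).1
  refine (atomOf_anti (subset_sigmaSets C) ⟨B, hB, hωB⟩).antisymm ?_
  exact subset_atomOf ⟨B, subset_sigmaSets C hB, hωB⟩ fun B' hB' hωB' => (hκ B' hB' hωB').2
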